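/- arXiv:2511.20958 — 4 statements merged into one kernel-verified Lean document; each statement's English description precedes it below -/
import Mathlib

section
/- Let n be a positive natural number and let p, q ∈ Mₙ(ℂ) be projections, i.e. pᴴ = p, p * p = p, qᴴ = q, q * q = q, where ᴴ denotes conjugate transpose. If trace(p * (1 - q)) = 0 and trace((1 - p) * q) = 0, then p = q. -/
lemma aux_mul_conjTranspose_eq_zero {n : ℕ} (A : Matrix (Fin n) (Fin n) ℂ)
    (h : (A * A.conjTranspose).trace = 0) : A = 0 := by
  have h' : ∑ i, ∑ j, Complex.normSq (A i j) = 0 := by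
    have := h
    simp only [Matrix.trace, Matrix.diag, Matrix.mul_apply, Matrix.conjTranspose_apply,
      RingHom.id_apply] at this
    have : (↑(∑ i, ∑ j, Complex.normSq (A i j)) : ℂ) = 0 := by
      rw [← this]
      push_cast
      simp [Complex.mul_conj]
    exact_mod_cast this
  ext i j
  have hnonneg : ∀ i ∈ Finset.univ, (0:ℝ) ≤ ∑ j, Complex.normSq (A i j) := by
    intro i _
    exact Finset.sum_nonneg fun j _ => Complex.normSq_nonneg _
  have hi := (Finset.sum_eq_zero_iff_of_nonneg hnonneg).mp h' i (Finset.mem_univ i)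
  have hj := (Finset.sum_eq_zero_iff_of_nonneg
    (fun j _ => Complex.normSq_nonneg (A i j))).mp hi j (Finset.mem_univ j)
  simpa using Complex.normSq_eq_zero.mp hj

theorem projections_eq_of_trace_conditions
    (n : ℕ) (hn : 0 < n) (p q : Matrix (Fin n) (Fin n) ℂ)
    (hp_sa : p.conjTranspose = p) (hp_idem : p * p = p)
    (hq_sa : q.conjTranspose = q) (hq_idem : q * q = q)
    (h1 : (p * (1 - q)).trace = 0) (h2 : ((1 - p) * q).trace = 0) :
    p = q := by
  have key : ∀ a b : Matrix (Fin n) (Fin n) ℂ, a.conjTranspose = a → a * a = a →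
      b.conjTranspose = b → b * b = b → (a * (1 - b)).trace = 0 → a * (1 - b) = 0 := by
    intro a b ha_sa ha_idem hb_sa hb_idem h
    set A := a * (1 - b) with hA
    have hAAt : A * A.conjTranspose = a * (1 - b) * a := by
      have hsb : (1 - b).conjTranspose = 1 - b := by
        simp [Matrix.conjTranspose_sub, hb_sa]
      have h1b : (1 - b) * (1 - b) = 1 - b := by rw [sub_mul, mul_sub, mul_sub, one_mul, mul_one, hb_idem, one_mul]; abel
      calc A * A.conjTranspose = a * ((1 - b) * (1 - b)) * a := by
            simp [hA, Matrix.conjTranspose_mul, hsb, ha_sa, Matrix.mul_assoc]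
        _ = a * (1 - b) * a := by rw [h1b]
    have htr : (A * A.conjTranspose).trace = 0 := by
      rw [hAAt, Matrix.trace_mul_cycle, ha_idem]
      exact h
    exact aux_mul_conjTranspose_eq_zero A htr
  have hpq : p * (1 - q) = 0 := key p q hp_sa hp_idem hq_sa hq_idem h1
  have hqp : q * (1 - p) = 0 := by
    apply key q p hq_sa hq_idem hp_sa hp_idem
    rw [← Matrix.trace_mul_comm]
    exact h2
  have e1 : p = p * q := by
    have := hpq
    rw [Matrix.mul_sub, Matrix.mul_one, sub_eq_zero] at this
    exact this
  have e2 : q = q * p := by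
    have := hqp
    rw [Matrix.mul_sub, Matrix.mul_one, sub_eq_zero] at this
    exact this
  have e2' : q = p * q := by
    calc q = q.conjTranspose := hq_sa.symm
      _ = (q * p).conjTranspose := by rw [← e2]
      _ = p.conjTranspose * q.conjTranspose := Matrix.conjTranspose_mul _ _
      _ = p * q := by rw [hp_sa, hq_sa]
  rw [e1]; exact e2'.symm
end

section
/- Let n be a positive natural number and let a ∈ Mₙ(ℂ). If trace(aᴴ * p * a * (1 - p)) = 0 for every projection p ∈ Mₙ(ℂ) (i.e. every p with pᴴ = p and p * p = p), then a is a scalar matrix: there exists c ∈ ℂ with a = c • 1. -/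
/-!
For a projection `p`, `trace (aᴴ p a (1 - p)) = ‖p a (1 - p)‖²` (Frobenius norm), so
`p a (1 - p) = 0` for every projection `p`. Applying this to both `p` and `1 - p` shows that `a`
commutes with every projection. The matrix units `Eᵢᵢ` and `½ (Eᵢᵢ + Eᵢⱼ + Eⱼᵢ + Eⱼⱼ)` are
projections, and `Eᵢⱼ = 2 Eᵢᵢ (½ (Eᵢᵢ + Eᵢⱼ + Eⱼᵢ + Eⱼⱼ)) Eⱼⱼ`, so `a` commutes with every
matrix unit and is therefore scalar.
-/

open Matrix
open scoped ComplexOrder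

theorem commute_of_mul_mul_one_sub_eq_zero {R : Type*} [Ring R] {p a : R}
    (h₁ : p * a * (1 - p) = 0) (h₂ : (1 - p) * a * p = 0) : Commute p a := by
  rw [mul_sub, mul_one, sub_eq_zero] at h₁
  rw [sub_mul, sub_mul, one_mul, sub_eq_zero] at h₂
  exact h₁.trans h₂.symm

theorem IsStarProjection.commute_of_forall_mul_mul_one_sub_eq_zero {R : Type*} [Ring R]
    [StarRing R] {a : R} (h : ∀ q : R, IsStarProjection q → q * a * (1 - q) = 0) {p : R}
    (hp : IsStarProjection p) : Commute p a :=
  commute_of_mul_mul_one_sub_eq_zero (h p hp) (by simpa using h (1 - p) hp.one_sub)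

namespace Matrix

variable {n : Type*} [Fintype n] [DecidableEq n]

theorem trace_conjTranspose_mul_self_mul_mul_one_sub {R : Type*} [CommRing R] [StarRing R]
    {p : Matrix n n R} (hp : IsStarProjection p) (a : Matrix n n R) :
    ((p * a * (1 - p))ᴴ * (p * a * (1 - p))).trace = (aᴴ * p * a * (1 - p)).trace := by
  have hpH : pᴴ = p := hp.isSelfAdjoint
  have hqH : (1 - p)ᴴ = 1 - p := hp.one_sub.isSelfAdjoint
  calc ((p * a * (1 - p))ᴴ * (p * a * (1 - p))).trace
      = ((1 - p) * (aᴴ * (p * p) * a * (1 - p))).trace := by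
        simp only [conjTranspose_mul, hpH, hqH, mul_assoc]
    _ = (aᴴ * (p * p) * a * ((1 - p) * (1 - p))).trace := by
        rw [trace_mul_comm]; simp only [mul_assoc]
    _ = (aᴴ * p * a * (1 - p)).trace := by
        rw [hp.isIdempotentElem.eq, hp.one_sub.isIdempotentElem.eq]

theorem mul_mul_one_sub_eq_zero_of_trace_eq_zero {R : Type*} [CommRing R] [PartialOrder R]
    [StarRing R] [StarOrderedRing R] [NoZeroDivisors R] {p a : Matrix n n R}
    (hp : IsStarProjection p) (h : (aᴴ * p * a * (1 - p)).trace = 0) :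
    p * a * (1 - p) = 0 :=
  trace_conjTranspose_mul_self_eq_zero_iff.mp <|
    (trace_conjTranspose_mul_self_mul_mul_one_sub hp a).trans h

theorem isStarProjection_single_same {R : Type*} [Semiring R] [StarRing R] (i : n) :
    IsStarProjection (single i i (1 : R)) :=
  ⟨by simp [IsIdempotentElem], by simp [IsSelfAdjoint, star_eq_conjTranspose]⟩

variable {K : Type*} [Field K] [NeZero (2 : K)]

theorem isStarProjection_inv_two_smul_single_add [StarRing K] {i j : n} (hij : i ≠ j) :
    IsStarProjection ((2 : K)⁻¹ •
      (single i i 1 + single i j 1 + single j i 1 + single j j (1 : K))) := by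
  constructor
  -- the matrix in parentheses is `v vᴴ` with `v = eᵢ + eⱼ`, so it squares to `2 •` itself
  · simp only [IsIdempotentElem, smul_mul_smul_comm, add_mul, mul_add, single_mul_single_same,
      single_mul_single_of_ne _ _ _ _ hij, single_mul_single_of_ne _ _ _ _ hij.symm, one_mul,
      add_zero, zero_add]
    match_scalars <;> field_simp <;> norm_num
  · simp [IsSelfAdjoint, star_eq_conjTranspose, star_inv₀]
    abel

theorem single_eq_two_smul_single_mul_mul_single {i j : n} (hij : i ≠ j) :
    single i j (1 : K) = (2 : K) • (single i i 1 * ((2 : K)⁻¹ •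
      (single i i 1 + single i j 1 + single j i 1 + single j j (1 : K))) * single j j 1) := by
  simp [mul_add, add_mul, single_mul_single_of_ne _ _ _ _ hij,
    mul_inv_cancel₀ (two_ne_zero : (2 : K) ≠ 0)]

theorem mem_range_scalar_of_forall_isStarProjection_commute [StarRing K] {a : Matrix n n K}
    (h : ∀ p, IsStarProjection p → Commute p a) : a ∈ Set.range (scalar n) := by
  refine mem_range_scalar_of_commute_single fun i j hij => ?_
  show Commute _ a
  rw [single_eq_two_smul_single_mul_mul_single hij]
  exact (((h _ (isStarProjection_single_same i)).mul_left
    (h _ (isStarProjection_inv_two_smul_single_add hij))).mul_left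
    (h _ (isStarProjection_single_same j))).smul_left 2

end Matrix

theorem scalar_of_trace_compression_zero_general
    (n : ℕ) (a : Matrix (Fin n) (Fin n) ℂ)
    (h : ∀ p : Matrix (Fin n) (Fin n) ℂ,
      p.conjTranspose = p → p * p = p →
      (a.conjTranspose * p * a * (1 - p)).trace = 0) :
    ∃ c : ℂ, a = c • (1 : Matrix (Fin n) (Fin n) ℂ) := by
  have hcompression (p : Matrix (Fin n) (Fin n) ℂ) (hp : IsStarProjection p) :
      p * a * (1 - p) = 0 :=
    mul_mul_one_sub_eq_zero_of_trace_eq_zero hp (h p hp.isSelfAdjoint hp.isIdempotentElem)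
  obtain ⟨c, hc⟩ := mem_range_scalar_of_forall_isStarProjection_commute fun p hp =>
    hp.commute_of_forall_mul_mul_one_sub_eq_zero hcompression
  exact ⟨c, by rw [← hc, scalar_apply, smul_one_eq_diagonal]⟩

theorem scalar_of_trace_compression_zero
    (n : ℕ) (hn : 0 < n) (a : Matrix (Fin n) (Fin n) ℂ)
    (h : ∀ p : Matrix (Fin n) (Fin n) ℂ,
      p.conjTranspose = p → p * p = p →
      (a.conjTranspose * p * a * (1 - p)).trace = 0) :
    ∃ c : ℂ, a = c • (1 : Matrix (Fin n) (Fin n) ℂ) :=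
  scalar_of_trace_compression_zero_general n a h
end

section
/- Let n be a positive natural number and let B : Mₙ(ℂ) → Mₙ(ℂ) → ℂ be ℂ-bilinear. Assume: (i) B 1 1 = 1; (ii) for every finite index type ι and all families x, y : ι → Mₙ(ℂ), the complex number Σ_{i,j} B ((x i)ᴴ * (x j)) ((y j) * (y i)ᴴ) is a nonnegative real number; (iii) B p (1 - p) = 0 for every projection p ∈ Mₙ(ℂ) (i.e. every p with pᴴ = p and p * p = p). Then B x y = trace(x * y) / n for all x, y ∈ Mₙ(ℂ). -/
/-!
Positivity of `B` on `Mₙ(ℂ) ⊗ Mₙ(ℂ)ᵒᵖ` gives a Cauchy–Schwarz inequality, so the vanishing of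
`B p (1 - p)` forces `B (p * x) (y * (1 - p)) = 0` and `B (x * p) ((1 - p) * y) = 0` for all
`x, y`. Using this for both `p` and `1 - p` gives `B (p * x) y = B x (y * p)` and
`B (x * p) y = B x (p * y)`, and since projections span `Mₙ(ℂ)` (spectral theorem) the same holds
for every matrix in place of `p`. Hence `B x y = τ (x * y)` for the tracial functional `τ = B 1`,
and tracial functionals on `Mₙ(ℂ)` are multiples of the trace, the multiple being fixed by
`B 1 1 = 1`.
-/

open scoped ComplexOrder ComplexConjugate
open Complex Matrix

theorem Complex.eq_zero_of_forall_real_mul_add_sq_mul_nonneg {w d : ℂ}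
    (h : ∀ s : ℝ, 0 ≤ s * w + s ^ 2 * d) : w = 0 := by
  have hre : ∀ s : ℝ, 0 ≤ d.re * (s * s) + w.re * s + 0 := fun s ↦ by
    have := (Complex.le_def.mp (h s)).1
    rw [← ofReal_pow] at this
    simp only [add_re, re_ofReal_mul, zero_re] at this
    linarith
  have him : ∀ s : ℝ, s * w.im + s ^ 2 * d.im = 0 := fun s ↦ by
    have := (Complex.le_def.mp (h s)).2
    rw [← ofReal_pow] at this
    simp only [add_im, im_ofReal_mul, zero_im] at this
    linarith
  have h1 := him 1
  have h2 := him (-1)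
  have := discrim_le_zero hre
  unfold discrim at this
  apply Complex.ext
  · rw [zero_re]; nlinarith
  · rw [zero_im]; linarith

section StarAlgebra

variable {A : Type*} [Ring A] [StarRing A] [Algebra ℂ A] [StarModule ℂ A]
  {B : A →ₗ[ℂ] A →ₗ[ℂ] ℂ}

theorem cross_terms_eq_zero_of_self_term_eq_zero
    (hpos : ∀ x y : Fin 2 → A, 0 ≤ ∑ i, ∑ j, B (star (x i) * x j) (y j * star (y i)))
    {x₁ y₁ : A} (h : B (star x₁ * x₁) (y₁ * star y₁) = 0) (x₂ y₂ : A) :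
    B (star x₁ * x₂) (y₂ * star y₁) = 0 ∧ B (star x₂ * x₁) (y₁ * star y₂) = 0 := by
  set b := B (star x₁ * x₂) (y₂ * star y₁)
  set b' := B (star x₂ * x₁) (y₁ * star y₂)
  set d := B (star x₂ * x₂) (y₂ * star y₂)
  have hquad : ∀ t : ℂ, 0 ≤ t * b + conj t * b' + t * conj t * d := fun t ↦ by
    have := hpos ![x₁, t • x₂] ![y₁, y₂]
    simp only [Fin.sum_univ_two, Matrix.cons_val_zero, Matrix.cons_val_one, star_smul,
      smul_mul_assoc, mul_smul_comm, map_smul, LinearMap.smul_apply, smul_eq_mul, star_def,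
      h] at this
    convert this using 1
    ring
  -- real `t` isolates `b + b'`, imaginary `t` isolates `b - b'`
  have hsum := eq_zero_of_forall_real_mul_add_sq_mul_nonneg (w := b + b') (d := d) fun s ↦ by
    convert hquad s using 1; simp only [conj_ofReal]; ring
  have hdiff := eq_zero_of_forall_real_mul_add_sq_mul_nonneg (w := I * (b - b')) (d := d)
      fun s ↦ by
    convert hquad (s * I) using 1
    simp only [map_mul, conj_ofReal, conj_I, mul_neg, neg_mul]
    linear_combination (s : ℂ) ^ 2 * d * I_sq
  constructor
  · linear_combination hsum / 2 - I * hdiff / 2 + (b - b') / 2 * I_sq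
  · linear_combination hsum / 2 + I * hdiff / 2 - (b - b') / 2 * I_sq

theorem apply_mul_one_sub_eq_zero_of_isStarProjection
    (hpos : ∀ x y : Fin 2 → A, 0 ≤ ∑ i, ∑ j, B (star (x i) * x j) (y j * star (y i)))
    {p : A} (hp : IsStarProjection p) (hdiag : B p (1 - p) = 0) (x y : A) :
    B (p * x) (y * (1 - p)) = 0 ∧ B (x * p) ((1 - p) * y) = 0 := by
  have hp' : star p = p := hp.isSelfAdjoint.star_eq
  have hq' : star (1 - p) = 1 - p := hp.one_sub.isSelfAdjoint.star_eq
  have h : B (star p * p) ((1 - p) * star (1 - p)) = 0 := by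
    rwa [hp', hq', hp.isIdempotentElem.eq, hp.one_sub.isIdempotentElem.eq]
  refine ⟨?_, ?_⟩
  · simpa only [hp', hq'] using (cross_terms_eq_zero_of_self_term_eq_zero hpos h x y).1
  · simpa only [hp', hq', star_star] using
      (cross_terms_eq_zero_of_self_term_eq_zero hpos h (star x) (star y)).2

theorem apply_mul_eq_apply_mul_of_isStarProjection
    (hpos : ∀ x y : Fin 2 → A, 0 ≤ ∑ i, ∑ j, B (star (x i) * x j) (y j * star (y i)))
    (hdiag : ∀ p, IsStarProjection p → B p (1 - p) = 0) {p : A} (hp : IsStarProjection p)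
    (x y : A) : B (p * x) y = B x (y * p) ∧ B (x * p) y = B x (p * y) := by
  obtain ⟨h₁, h₂⟩ := apply_mul_one_sub_eq_zero_of_isStarProjection hpos hp (hdiag p hp) x y
  obtain ⟨h₃, h₄⟩ := apply_mul_one_sub_eq_zero_of_isStarProjection hpos hp.one_sub
    (by simpa only [sub_sub_cancel] using hdiag _ hp.one_sub) x y
  rw [sub_sub_cancel] at h₃ h₄
  constructor
  · calc B (p * x) y = B (p * x) (y * p) + B (p * x) (y * (1 - p)) := by
          rw [← map_add, ← mul_add, add_sub_cancel, mul_one]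
      _ = B (p * x) (y * p) + B ((1 - p) * x) (y * p) := by rw [h₁, h₃]
      _ = B x (y * p) := by
          rw [← LinearMap.add_apply, ← map_add, ← add_mul, add_sub_cancel, one_mul]
  · calc B (x * p) y = B (x * p) (p * y) + B (x * p) ((1 - p) * y) := by
          rw [← map_add, ← add_mul, add_sub_cancel, one_mul]
      _ = B (x * p) (p * y) + B (x * (1 - p)) (p * y) := by rw [h₂, h₄]
      _ = B x (p * y) := by
          rw [← LinearMap.add_apply, ← map_add, ← mul_add, add_sub_cancel, mul_one]

end StarAlgebra

theorem apply_mul_eq_apply_mul_of_span_isStarProjection {A : Type*} [Ring A] [Star A]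
    [Algebra ℂ A] {B : A →ₗ[ℂ] A →ₗ[ℂ] ℂ}
    (hspan : Submodule.span ℂ {p : A | IsStarProjection p} = ⊤)
    (h : ∀ p, IsStarProjection p → ∀ x y, B (p * x) y = B x (y * p) ∧ B (x * p) y = B x (p * y))
    (a x y : A) : B (a * x) y = B x (y * a) ∧ B (x * a) y = B x (a * y) := by
  have hleft : B.flip y ∘ₗ LinearMap.mulRight ℂ x = B x ∘ₗ LinearMap.mulLeft ℂ y :=
    LinearMap.ext_on hspan fun p hp ↦ (h p hp x y).1
  have hright : B.flip y ∘ₗ LinearMap.mulLeft ℂ x = B x ∘ₗ LinearMap.mulRight ℂ y :=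
    LinearMap.ext_on hspan fun p hp ↦ (h p hp x y).2
  exact ⟨LinearMap.congr_fun hleft a, LinearMap.congr_fun hright a⟩

theorem Matrix.isStarProjection_single_one {n : Type*} [Fintype n] [DecidableEq n] (i : n) :
    IsStarProjection (single i i (1 : ℂ)) :=
  ⟨by simp [IsIdempotentElem], by simp [IsSelfAdjoint, star_eq_conjTranspose]⟩

theorem Matrix.span_isStarProjection {n : Type*} [Fintype n] [DecidableEq n] :
    Submodule.span ℂ {p : Matrix n n ℂ | IsStarProjection p} = ⊤ := by
  rw [eq_top_iff, ← span_selfAdjoint, Submodule.span_le]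
  intro a (ha : IsSelfAdjoint a)
  rw [IsHermitian.spectral_theorem ha, ← sum_single_eq_diagonal, map_sum]
  refine Submodule.sum_mem _ fun i _ ↦ ?_
  rw [← mul_one ((RCLike.ofReal ∘ _) i), ← smul_eq_mul, ← smul_single, map_smul]
  exact Submodule.smul_mem _ _ (Submodule.subset_span ((isStarProjection_single_one i).map _))

theorem Matrix.card_mul_apply_eq_apply_one_mul_trace {R n : Type*} [CommRing R] [Fintype n]
    [DecidableEq n] (g : Matrix n n R →ₗ[R] R) (hg : ∀ x y, g (x * y) = g (y * x))
    (x : Matrix n n R) : (Fintype.card n : R) * g x = g 1 * x.trace := by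
  have hsingle : ∀ i j c, g (single i j c) = c * g (single i j 1) := fun i j c ↦ by
    rw [← smul_eq_mul, ← map_smul, smul_single, smul_eq_mul, mul_one]
  have hoff : ∀ i j, i ≠ j → g (single i j 1) = 0 := fun i j hij ↦ by
    rw [← mul_one (1 : R), ← single_mul_single_same (c := (1 : R)) i j j, hg,
      single_mul_single_of_ne (h := hij.symm), map_zero]
  have hdiag : ∀ i j, g (single i i 1) = g (single j j 1) := fun i j ↦ by
    rw [← mul_one (1 : R), ← single_mul_single_same (c := (1 : R)) i j i, hg,
      single_mul_single_same]
  have hone : ∀ i, (Fintype.card n : R) * g (single i i 1) = g 1 := fun i ↦ by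
    simp [← sum_single_one, map_sum, hdiag _ i, Finset.card_univ]
  have hx : g x = ∑ i, x i i * g (single i i 1) := by
    conv_lhs => rw [matrix_eq_sum_single x]
    rw [map_sum]
    refine Finset.sum_congr rfl fun i _ ↦ ?_
    rw [map_sum, Finset.sum_eq_single i (fun j _ hji ↦ ?_) (by simp)]
    · exact hsingle i i _
    · rw [hsingle, hoff i j hji.symm, mul_zero]
  rw [hx, Finset.mul_sum, trace, Finset.mul_sum]
  exact Finset.sum_congr rfl fun i _ ↦ by rw [mul_left_comm, hone, mul_comm, diag_apply]

theorem diagonal_state_on_matrix_factor_is_normalized_trace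
    (n : ℕ) (hn : 0 < n)
    (B : Matrix (Fin n) (Fin n) ℂ →ₗ[ℂ] Matrix (Fin n) (Fin n) ℂ →ₗ[ℂ] ℂ)
    (hunit : B 1 1 = 1)
    (hpos : ∀ (ι : Type) [Fintype ι] (x y : ι → Matrix (Fin n) (Fin n) ℂ),
      0 ≤ ∑ i, ∑ j, B ((x i).conjTranspose * (x j)) ((y j) * (y i).conjTranspose))
    (hdiag : ∀ p : Matrix (Fin n) (Fin n) ℂ,
      p.conjTranspose = p → p * p = p → B p (1 - p) = 0) :
    ∀ x y : Matrix (Fin n) (Fin n) ℂ, B x y = (x * y).trace / n := by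
  have hcomm := apply_mul_eq_apply_mul_of_span_isStarProjection span_isStarProjection
    fun p hp ↦ apply_mul_eq_apply_mul_of_isStarProjection (hpos (Fin 2))
      (fun q hq ↦ hdiag q hq.isSelfAdjoint hq.isIdempotentElem) hp
  have hB : ∀ x y, B x y = B 1 (x * y) := fun x y ↦ by simpa using (hcomm x 1 y).2
  have htracial : ∀ x y, B 1 (x * y) = B 1 (y * x) := fun x y ↦ by
    simpa [← hB] using (hcomm x 1 y).1
  intro x y
  have := card_mul_apply_eq_apply_one_mul_trace (B 1) htracial (x * y)
  rw [Fintype.card_fin, ← hB, hunit, one_mul] at this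
  rw [eq_div_iff (Nat.cast_ne_zero.mpr hn.ne'), mul_comm, this]
end

section
/- Let n, m be positive natural numbers, let ψ : Mₙ(ℂ) → Mₘ(ℂ) be a unital star-algebra homomorphism, let p ∈ Mₙ(ℂ) be a projection (pᴴ = p and p * p = p), and let V = {T : Matrix (Fin m) (Fin n) ℂ | T * a = ψ(a) * T for all a ∈ Mₙ(ℂ)}. Then the submodule of ℂᵐ spanned by the union, over T ∈ V, of the ranges of the linear maps ℂⁿ → ℂᵐ given by v ↦ (T * p) * v, equals the range of the linear map v ↦ ψ(p) * v. Equivalently, the common support projection of the subspaces T(im p), T ∈ V, is exactly ψ(p). -/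
open Matrix

/-- The intertwiner associated to a vector `x` and index `j`. -/
private noncomputable def Tmat {n m : ℕ} (ψ : Matrix (Fin n) (Fin n) ℂ →⋆ₐ[ℂ] Matrix (Fin m) (Fin m) ℂ)
    (x : Fin m → ℂ) (j : Fin n) : Matrix (Fin m) (Fin n) ℂ :=
  Matrix.of fun r k => ((ψ (Matrix.single k j 1)).mulVec x) r

private lemma Tmat_mulVec {n m : ℕ} (ψ : Matrix (Fin n) (Fin n) ℂ →⋆ₐ[ℂ] Matrix (Fin m) (Fin m) ℂ)
    (x : Fin m → ℂ) (j : Fin n) (w : Fin n → ℂ) :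
    (Tmat ψ x j).mulVec w
      = (ψ (∑ k, w k • Matrix.single k j 1)).mulVec x := by
  ext r
  simp only [Tmat, map_sum, _root_.map_smul, Matrix.mulVec, dotProduct,
    Matrix.sum_apply, Matrix.smul_apply, Finset.sum_mul, Finset.mul_sum, smul_eq_mul,
    Matrix.of_apply]
  rw [Finset.sum_comm]
  apply Finset.sum_congr rfl
  intro t _
  apply Finset.sum_congr rfl
  intro k _
  ring

private lemma sum_smul_std {n : ℕ} (a : Matrix (Fin n) (Fin n) ℂ) (s j : Fin n) :
    (∑ k, a k s • Matrix.single k j (1 : ℂ))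
      = a * Matrix.single s j 1 := by
  ext u v
  simp only [Matrix.sum_apply, Matrix.smul_apply, Matrix.mul_apply,
    Matrix.single, Matrix.of_apply, smul_eq_mul, mul_ite, mul_one, mul_zero]
  by_cases hv : j = v <;> simp [hv, Finset.sum_ite_eq, eq_comm]

private lemma sum_mulVec_eq {m' n' : ℕ} (f : Fin n' → Matrix (Fin m') (Fin m') ℂ)
    (x : Fin m' → ℂ) :
    (∑ j, (f j).mulVec x) = (∑ j, f j).mulVec x := by
  ext r
  simp [Matrix.mulVec, dotProduct, Matrix.sum_apply, Finset.sum_mul]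
  rw [Finset.sum_comm]

private lemma Tmat_intertwines {n m : ℕ}
    (ψ : Matrix (Fin n) (Fin n) ℂ →⋆ₐ[ℂ] Matrix (Fin m) (Fin m) ℂ)
    (x : Fin m → ℂ) (j : Fin n) (a : Matrix (Fin n) (Fin n) ℂ) :
    Tmat ψ x j * a = ψ a * Tmat ψ x j := by
  ext r s
  have h1 : (Tmat ψ x j * a) r s = ((Tmat ψ x j).mulVec fun k => a k s) r := by
    simp [Matrix.mul_apply, Matrix.mulVec, dotProduct]
  rw [h1, Tmat_mulVec, sum_smul_std, _root_.map_mul, ← Matrix.mulVec_mulVec]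
  simp [Matrix.mul_apply, Matrix.mulVec, dotProduct, Tmat]

theorem support_of_intertwiner_images
    (n m : ℕ) (hn : 0 < n) (hm : 0 < m)
    (ψ : Matrix (Fin n) (Fin n) ℂ →⋆ₐ[ℂ] Matrix (Fin m) (Fin m) ℂ)
    (p : Matrix (Fin n) (Fin n) ℂ)
    (hp_sa : p.conjTranspose = p) (hp_idem : p * p = p) :
    Submodule.span ℂ
        (⋃ T ∈ {T : Matrix (Fin m) (Fin n) ℂ |
            ∀ a : Matrix (Fin n) (Fin n) ℂ, T * a = ψ a * T},
          (LinearMap.range (Matrix.mulVecLin (T * p)) :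
            Submodule ℂ (Fin m → ℂ)))
      = LinearMap.range (Matrix.mulVecLin (ψ p)) := by
  apply le_antisymm
  · rw [Submodule.span_le]
    rintro y hy
    simp only [Set.mem_iUnion, SetLike.mem_coe, LinearMap.mem_range, Set.mem_setOf_eq] at hy
    obtain ⟨T, hT, v, rfl⟩ := hy
    refine ⟨T.mulVec v, ?_⟩
    simp only [Matrix.mulVecLin_apply]
    rw [hT p, ← Matrix.mulVec_mulVec]
  · rintro y ⟨x, rfl⟩
    have key : (ψ p).mulVecLin x
        = ∑ j : Fin n, (Tmat ψ x j * p).mulVec (Pi.single j 1) := by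
      have : ∀ j : Fin n, (Tmat ψ x j * p).mulVec (Pi.single j 1)
          = (ψ (∑ k, p k j • Matrix.single k j 1)).mulVec x := by
        intro j
        rw [← Matrix.mulVec_mulVec, Matrix.mulVec_single_one, ← Tmat_mulVec]
        congr 1
      simp only [this]
      rw [sum_mulVec_eq, ← map_sum, Matrix.mulVecLin_apply]
      congr 2
      rw [Finset.sum_comm]
      conv_lhs => rw [matrix_eq_sum_single p]
      simp
    rw [key]
    apply Submodule.sum_mem
    intro j _
    apply Submodule.subset_span
    simp only [Set.mem_iUnion, SetLike.mem_coe, LinearMap.mem_range, Set.mem_setOf_eq]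
    exact ⟨Tmat ψ x j, Tmat_intertwines ψ x j, Pi.single j 1, rfl⟩
end
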